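/- arXiv:1807.00333 — 2 statements merged into one kernel-verified Lean document; each statement's English description precedes it below -/
import Mathlib

section
/- For any two distinct [a], [b] ∈ Λ₁ one has mult(a,b) = 6, and Λ(a,b) = {[c] ∈ Λ₂ : Supp(c) = Supp(a) ∪ Supp(b)}, a set of exactly 4 elements. -/
open Complex

noncomputable section

namespace G31

/-- Vectors `a = (a₁,a₂,a₃,a₄) ∈ ℂ⁴`. -/
abbrev V : Type := Fin 4 → ℂ

/-- `μ₄ ⊂ ℂ`, the group of fourth roots of unity `{1, i, -1, -i}`. -/
def mu4 : Set ℂ := {z : ℂ | z ^ 4 = 1}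

/-- `Ψ = μ₄ ∪ {0}`. -/
def Psi : Set ℂ := insert 0 mu4

/-- `a ∈ Ψ⁴`. -/
def PsiV (a : V) : Prop := ∀ k, a k ∈ Psi

/-- The diagonal multiplicative action of `μ₄` on `ℂ⁴`: `a ~ b` iff `b = ξ • a` for some
`ξ ∈ μ₄`. -/
def rel (a b : V) : Prop := ∃ ξ : ℂ, ξ ^ 4 = 1 ∧ b = ξ • a

theorem rel_refl (a : V) : rel a a := ⟨1, by norm_num, by simp⟩

theorem rel_symm {a b : V} (h : rel a b) : rel b a := by
  obtain ⟨ξ, hξ, rfl⟩ := h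
  refine ⟨ξ ^ 3, by rw [show (ξ ^ 3) ^ 4 = (ξ ^ 4) ^ 3 by ring, hξ, one_pow], ?_⟩
  rw [smul_smul, show ξ ^ 3 * ξ = ξ ^ 4 by ring, hξ, one_smul]

theorem rel_trans {a b c : V} (h : rel a b) (h' : rel b c) : rel a c := by
  obtain ⟨ξ, hξ, rfl⟩ := h
  obtain ⟨η, hη, rfl⟩ := h'
  exact ⟨η * ξ, by rw [mul_pow, hξ, hη, one_mul], by rw [smul_smul]⟩

/-- The setoid on `ℂ⁴` given by the diagonal `μ₄`-action. -/
def phiSetoid : Setoid V := ⟨rel, rel_refl, rel_symm, rel_trans⟩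

/-- `Φ`, the quotient of `Ψ⁴` (here of `ℂ⁴`) by the diagonal `μ₄`-action. -/
def Phi : Type := Quotient phiSetoid

/-- The class `[a] ∈ Φ` of `a`. -/
def cls (a : V) : Phi := Quotient.mk phiSetoid a

/-- `Supp a = {k : aₖ ≠ 0}`. -/
def Supp (a : V) : Set (Fin 4) := {k | a k ≠ 0}

/-- `prod a = a₁a₂a₃a₄`. -/
def prod4 (a : V) : ℂ := ∏ k, a k

/-- The hyperplane `X_a = {x : ∑ aₖ xₖ = 0} ⊂ ℂ⁴`. -/
def Xa (a : V) : Set V := {x | ∑ k, a k * x k = 0}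

/-- The support of a class `[a] ∈ Φ` (independent of the representative). -/
def SuppC (c : Phi) : Set (Fin 4) := {k | ∃ a : V, cls a = c ∧ a k ≠ 0}

/-- `Λ₁ = {[a] : a ∈ Ψ⁴, |Supp a| = 1}`. -/
def Lambda1 : Set Phi := {c | ∃ a : V, cls a = c ∧ PsiV a ∧ (Supp a).ncard = 1}

/-- `Λ₂ = {[a] : a ∈ Ψ⁴, |Supp a| = 2}`. -/
def Lambda2 : Set Phi := {c | ∃ a : V, cls a = c ∧ PsiV a ∧ (Supp a).ncard = 2}

/-- `Λ₃ = {[a] : a ∈ Ψ⁴, |Supp a| = 4, prod a = ±1}`. -/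
def Lambda3 : Set Phi :=
  {c | ∃ a : V, cls a = c ∧ PsiV a ∧ (Supp a).ncard = 4 ∧ (prod4 a = 1 ∨ prod4 a = -1)}

/-- `Λ = Λ₁ ⊔ Λ₂ ⊔ Λ₃`, the hyperplanes of the reflection arrangement of type `G₃₁`. -/
def Lambda : Set Phi := Lambda1 ∪ Lambda2 ∪ Lambda3

/-- `Λ̂(a,b) = {[c] ∈ Λ : X_c ⊇ X_a ∩ X_b}` (all notions independent of representatives). -/
def LambdaHat (A B : Phi) : Set Phi :=
  {c | c ∈ Lambda ∧ ∃ xa xb xc : V, cls xa = A ∧ cls xb = B ∧ cls xc = c ∧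
    Xa xa ∩ Xa xb ⊆ Xa xc}

/-- `mult(a,b) = |Λ̂(a,b)|`. -/
def mult (A B : Phi) : ℕ := (LambdaHat A B).ncard

/-- `Λ(a,b) = Λ̂(a,b) \ {[a],[b]}`. -/
def LambdaAB (A B : Phi) : Set Phi := LambdaHat A B \ {A, B}

/-- `Λ_{j'}^m(a) = {[b] ∈ Λ_{j'} : [b] ≠ [a], mult(a,b) = m}`, where `S` stands for `Λ_{j'}`. -/
def LambdaPow (S : Set Phi) (m : ℕ) (A : Phi) : Set Phi :=
  {B | B ∈ S ∧ B ≠ A ∧ mult A B = m}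

/-- `diff([a],[b]) = min_ξ |Supp (ξ a − b)|`, the minimum over representatives. -/
def diffC (A B : Phi) : ℕ :=
  sInf {n | ∃ a b : V, cls a = A ∧ cls b = B ∧ (Supp (a - b)).ncard = n}

end G31
namespace G31

/-- The `j`-th standard basis vector. -/
def ev (j : Fin 4) : V := fun l => if l = j then 1 else 0

/-- The vector with `1` in position `j`, `u` in position `k`, `0` elsewhere. -/
def vv (j k : Fin 4) (u : ℂ) : V := fun l => if l = j then 1 else if l = k then u else 0

lemma mu4_ne_zero {z : ℂ} (h : z ^ 4 = 1) : z ≠ 0 := by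
  intro hz; rw [hz] at h; norm_num at h

lemma mu4_cases {z : ℂ} (h : z ^ 4 = 1) : z = 1 ∨ z = -1 ∨ z = I ∨ z = -I := by
  have h4 : (z - 1) * (z + 1) * (z - I) * (z + I) = 0 := by
    linear_combination h - (z ^ 2 - 1) * Complex.I_sq
  rcases mul_eq_zero.1 h4 with h' | h'
  · rcases mul_eq_zero.1 h' with h'' | h''
    · rcases mul_eq_zero.1 h'' with h3 | h3
      · exact Or.inl (sub_eq_zero.1 h3)
      · exact Or.inr (Or.inl (eq_neg_of_add_eq_zero_left h3))
    · exact Or.inr (Or.inr (Or.inl (sub_eq_zero.1 h'')))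
  · exact Or.inr (Or.inr (Or.inr (eq_neg_of_add_eq_zero_left h')))

lemma cls_eq_iff {a b : V} : cls a = cls b ↔ rel a b :=
  ⟨fun h => Quotient.exact h, fun h => Quotient.sound h⟩

lemma Supp_cls_eq {a b : V} (h : cls a = cls b) : Supp a = Supp b := by
  obtain ⟨ξ, hξ, rfl⟩ := cls_eq_iff.1 h
  have hξ0 : ξ ≠ 0 := mu4_ne_zero hξ
  ext l
  simp [Supp, Pi.smul_apply, smul_eq_mul, hξ0, mul_ne_zero_iff]

lemma Xa_smul {ξ : ℂ} (hξ : ξ ≠ 0) (a : V) : Xa (ξ • a) = Xa a := by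
  ext x
  have hsum : ∑ l, (ξ • a) l * x l = ξ * ∑ l, a l * x l := by
    rw [Finset.mul_sum]
    exact Finset.sum_congr rfl fun l _ => by simp [mul_assoc]
  simp only [Xa, Set.mem_setOf_eq, hsum, mul_eq_zero, hξ, false_or]

lemma mem_Xa_ev {j : Fin 4} {x : V} : x ∈ Xa (ev j) ↔ x j = 0 := by
  simp [Xa, ev, ite_mul]

lemma psi_pow {a : V} (haP : PsiV a) {l : Fin 4} (h : a l ≠ 0) : (a l) ^ 4 = 1 := by
  rcases Set.mem_insert_iff.1 (haP l) with h0 | h4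
  · exact absurd h0 h
  · exact h4

lemma subset_iff {j k : Fin 4} {c : V} :
    Xa (ev j) ∩ Xa (ev k) ⊆ Xa c ↔ ∀ l, l ≠ j → l ≠ k → c l = 0 := by
  constructor
  · intro h l hlj hlk
    have hx : ev l ∈ Xa (ev j) ∩ Xa (ev k) := by
      constructor
      · rw [mem_Xa_ev]; simp [ev, Ne.symm hlj]
      · rw [mem_Xa_ev]; simp [ev, Ne.symm hlk]
    have hc := h hx
    simpa [Xa, ev, mul_ite] using hc
  · intro h x hx
    obtain ⟨hxj, hxk⟩ := hx
    rw [mem_Xa_ev] at hxj hxk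
    show ∑ l, c l * x l = 0
    apply Finset.sum_eq_zero
    intro l _
    by_cases h1 : l = j
    · subst h1; rw [hxj, mul_zero]
    by_cases h2 : l = k
    · subst h2; rw [hxk, mul_zero]
    rw [h l h1 h2, zero_mul]

lemma cls_ev_eq {j : Fin 4} {a : V} (ha4 : (a j) ^ 4 = 1) (hsupp : ∀ l, l ≠ j → a l = 0) :
    cls a = cls (ev j) := by
  refine (cls_eq_iff.2 ⟨a j, ha4, ?_⟩).symm
  funext l
  by_cases h : l = j
  · subst h; simp [ev]
  · simp [ev, h, hsupp l h]

lemma cls_vv_eq {j k : Fin 4} (hjk : j ≠ k) {a : V} (haj : (a j) ^ 4 = 1)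
    (hsupp : ∀ l, l ≠ j → l ≠ k → a l = 0) :
    cls a = cls (vv j k (a k * (a j)⁻¹)) := by
  have haj0 : a j ≠ 0 := mu4_ne_zero haj
  refine cls_eq_iff.2 ⟨(a j)⁻¹, by rw [inv_pow, haj, inv_one], ?_⟩
  funext l
  by_cases h1 : l = j
  · subst h1
    simp [vv, inv_mul_cancel₀ haj0]
  by_cases h2 : l = k
  · subst h2
    simp [vv, h1, mul_comm]
  · simp [vv, h1, h2, hsupp l h1 h2]

lemma Supp_ev (j : Fin 4) : Supp (ev j) = {j} := by
  ext l
  simp only [Supp, Set.mem_setOf_eq, ev, Set.mem_singleton_iff]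
  by_cases h : l = j <;> simp [h]

lemma Supp_vv {j k : Fin 4} (hjk : j ≠ k) {u : ℂ} (hu : u ≠ 0) :
    Supp (vv j k u) = {j, k} := by
  ext l
  simp only [Supp, Set.mem_setOf_eq, vv, Set.mem_insert_iff, Set.mem_singleton_iff]
  by_cases h1 : l = j
  · simp [h1]
  · by_cases h2 : l = k <;> simp [h1, h2, hu, Ne.symm hjk]

lemma PsiV_ev (j : Fin 4) : PsiV (ev j) := by
  intro l
  by_cases h : l = j <;> simp [ev, h, Psi, mu4]

lemma PsiV_vv {j k : Fin 4} {u : ℂ} (hu : u ^ 4 = 1) : PsiV (vv j k u) := by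
  intro l
  by_cases h1 : l = j
  · simp [vv, h1, Psi, mu4]
  by_cases h2 : l = k
  · simp [vv, h1, h2, Psi, mu4, hu]
  · simp [vv, h1, h2, Psi]

lemma ev_mem_Lambda1 (j : Fin 4) : cls (ev j) ∈ Lambda1 :=
  ⟨ev j, rfl, PsiV_ev j, by rw [Supp_ev]; exact Set.ncard_singleton j⟩

lemma vv_mem_Lambda2 {j k : Fin 4} (hjk : j ≠ k) {u : ℂ} (hu : u ^ 4 = 1) :
    cls (vv j k u) ∈ Lambda2 :=
  ⟨vv j k u, rfl, PsiV_vv hu, by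
    rw [Supp_vv hjk (mu4_ne_zero hu)]; exact Set.ncard_pair hjk⟩

lemma SuppC_cls (a : V) : SuppC (cls a) = Supp a := by
  ext l
  constructor
  · rintro ⟨b, hb, hbl⟩
    rw [← Supp_cls_eq hb]
    exact hbl
  · intro h
    exact ⟨a, rfl, h⟩

lemma cls_ev_ne {j k : Fin 4} (h : j ≠ k) : cls (ev j) ≠ cls (ev k) := by
  intro he
  have hs := Supp_cls_eq he
  rw [Supp_ev, Supp_ev] at hs
  exact h (Set.singleton_eq_singleton_iff.1 hs)

lemma cls_ev_ne_vv {j k j' : Fin 4} (hjk : j ≠ k) {u : ℂ} (hu : u ≠ 0) :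
    cls (ev j') ≠ cls (vv j k u) := by
  intro he
  have hs := Supp_cls_eq he
  rw [Supp_ev, Supp_vv hjk hu] at hs
  have h1 := Set.ncard_singleton j'
  rw [hs, Set.ncard_pair hjk] at h1
  norm_num at h1

lemma vv_apply_j (j k : Fin 4) (u : ℂ) : vv j k u j = 1 := if_pos rfl

lemma vv_apply_k {j k : Fin 4} (hjk : j ≠ k) (u : ℂ) : vv j k u k = u := by
  show (if k = j then 1 else if k = k then u else 0) = u
  rw [if_neg (Ne.symm hjk), if_pos rfl]

lemma cls_vv_ne {j k : Fin 4} (hjk : j ≠ k) {u u' : ℂ} (huu : u ≠ u') :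
    cls (vv j k u) ≠ cls (vv j k u') := by
  intro he
  obtain ⟨ξ, hξ4, hξ⟩ := cls_eq_iff.1 he
  have h1 := congrFun hξ j
  have h2 := congrFun hξ k
  rw [vv_apply_j, Pi.smul_apply, smul_eq_mul, vv_apply_j, mul_one] at h1
  rw [vv_apply_k hjk, Pi.smul_apply, smul_eq_mul, vv_apply_k hjk] at h2
  rw [← h1, one_mul] at h2
  exact huu h2.symm

lemma lambda1_classify {l : Fin 4} {a : V} (haP : PsiV a) (hs : Supp a = {l}) :
    cls a = cls (ev l) := by
  have hl : a l ≠ 0 := by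
    have : l ∈ Supp a := by rw [hs]; exact rfl
    exact this
  refine cls_ev_eq (psi_pow haP hl) fun m hm => ?_
  by_contra hm0
  have : m ∈ Supp a := hm0
  rw [hs] at this
  exact hm this

lemma lambda1_struct {C : Phi} (h : C ∈ Lambda1) : ∃ j, C = cls (ev j) := by
  obtain ⟨a, hac, haP, hcard⟩ := h
  obtain ⟨l, hl⟩ := Set.ncard_eq_one.1 hcard
  exact ⟨l, by rw [← hac, lambda1_classify haP hl]⟩

lemma lambda2_classify {j k : Fin 4} (hjk : j ≠ k) {a : V} (haP : PsiV a)
    (hs : Supp a = {j, k}) :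
    cls a ∈ ({cls (vv j k 1), cls (vv j k I), cls (vv j k (-1)), cls (vv j k (-I))}
      : Set Phi) := by
  have hj : a j ≠ 0 := by
    have : j ∈ Supp a := by rw [hs]; exact Set.mem_insert j {k}
    exact this
  have hk : a k ≠ 0 := by
    have : k ∈ Supp a := by rw [hs]; exact Set.mem_insert_iff.2 (Or.inr rfl)
    exact this
  have haj4 := psi_pow haP hj
  have hak4 := psi_pow haP hk
  have hcls := cls_vv_eq hjk haj4 (fun m h1 h2 => by
    by_contra hm0
    have hm : m ∈ Supp a := hm0
    rw [hs] at hm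
    rcases hm with h | h
    · exact h1 h
    · exact h2 h)
  have hu4 : (a k * (a j)⁻¹) ^ 4 = 1 := by
    rw [mul_pow, inv_pow, hak4, haj4, inv_one, mul_one]
  rcases mu4_cases hu4 with h | h | h | h <;> rw [h] at hcls <;> rw [hcls] <;> simp

lemma hat_eq {j k : Fin 4} (hjk : j ≠ k) :
    LambdaHat (cls (ev j)) (cls (ev k)) =
      {cls (ev j), cls (ev k), cls (vv j k 1), cls (vv j k I),
       cls (vv j k (-1)), cls (vv j k (-I))} := by
  apply Set.Subset.antisymm
  · rintro C ⟨hCL, xa, xb, xc, hxa, hxb, hxc, hsub⟩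
    have hXa : Xa xa = Xa (ev j) := by
      obtain ⟨ξ, hξ, hξe⟩ := cls_eq_iff.1 hxa.symm
      rw [hξe, Xa_smul (mu4_ne_zero hξ)]
    have hXb : Xa xb = Xa (ev k) := by
      obtain ⟨ξ, hξ, hξe⟩ := cls_eq_iff.1 hxb.symm
      rw [hξe, Xa_smul (mu4_ne_zero hξ)]
    rw [hXa, hXb] at hsub
    have hc0 : ∀ l, l ≠ j → l ≠ k → xc l = 0 := subset_iff.1 hsub
    rcases hCL with (h1 | h2) | h3
    · obtain ⟨a, hac, haP, hcard⟩ := h1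
      have hsa : Supp a = Supp xc := Supp_cls_eq (hac.trans hxc.symm)
      obtain ⟨l, hl⟩ := Set.ncard_eq_one.1 hcard
      have hlm : l = j ∨ l = k := by
        by_contra hcon
        push_neg at hcon
        have hlx : l ∈ Supp xc := by rw [← hsa, hl]; exact rfl
        exact hlx (hc0 l hcon.1 hcon.2)
      have hC : C = cls a := hac.symm
      rcases hlm with rfl | rfl
      · rw [hC, lambda1_classify haP hl]; simp
      · rw [hC, lambda1_classify haP hl]; simp
    · obtain ⟨a, hac, haP, hcard⟩ := h2
      have hsa : Supp a = Supp xc := Supp_cls_eq (hac.trans hxc.symm)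
      have hsub2 : Supp a ⊆ {j, k} := by
        intro l hl
        by_contra hcon
        simp only [Set.mem_insert_iff, Set.mem_singleton_iff] at hcon
        push_neg at hcon
        have hlx : l ∈ Supp xc := by rw [← hsa]; exact hl
        exact hlx (hc0 l hcon.1 hcon.2)
      have heq : Supp a = {j, k} :=
        Set.eq_of_subset_of_ncard_le hsub2 (by rw [hcard, Set.ncard_pair hjk])
      have := lambda2_classify hjk haP heq
      rw [← hac]
      simp only [Set.mem_insert_iff, Set.mem_singleton_iff] at this ⊢
      tauto
    · obtain ⟨a, hac, haP, hcard, _⟩ := h3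
      exfalso
      have hsa : Supp a = Supp xc := Supp_cls_eq (hac.trans hxc.symm)
      have hsub2 : Supp a ⊆ {j, k} := by
        intro l hl
        by_contra hcon
        simp only [Set.mem_insert_iff, Set.mem_singleton_iff] at hcon
        push_neg at hcon
        have hlx : l ∈ Supp xc := by rw [← hsa]; exact hl
        exact hlx (hc0 l hcon.1 hcon.2)
      have hle := Set.ncard_le_ncard hsub2 (Set.toFinite _)
      rw [hcard, Set.ncard_pair hjk] at hle
      norm_num at hle
  · intro C hC
    have base : ∀ u : ℂ, u ^ 4 = 1 →
        cls (vv j k u) ∈ LambdaHat (cls (ev j)) (cls (ev k)) := by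
      intro u hu
      refine ⟨Or.inl (Or.inr (vv_mem_Lambda2 hjk hu)), ev j, ev k, vv j k u,
        rfl, rfl, rfl, ?_⟩
      rw [subset_iff]
      intro l h1 h2
      simp [vv, h1, h2]
    have baseE : ∀ l : Fin 4, l = j ∨ l = k →
        cls (ev l) ∈ LambdaHat (cls (ev j)) (cls (ev k)) := by
      intro l hl
      refine ⟨Or.inl (Or.inl (ev_mem_Lambda1 l)), ev j, ev k, ev l, rfl, rfl, rfl, ?_⟩
      rcases hl with rfl | rfl
      · exact Set.inter_subset_left
      · exact Set.inter_subset_right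
    have hI4 : (I : ℂ) ^ 4 = 1 := by
      rw [show (4 : ℕ) = 2 * 2 from rfl, pow_mul, Complex.I_sq]; norm_num
    have hnI4 : (-I : ℂ) ^ 4 = 1 := by
      rw [show (-I : ℂ) ^ 4 = I ^ 4 by ring, hI4]
    simp only [Set.mem_insert_iff, Set.mem_singleton_iff] at hC
    rcases hC with rfl | rfl | rfl | rfl | rfl | rfl
    · exact baseE j (Or.inl rfl)
    · exact baseE k (Or.inr rfl)
    · exact base 1 (by norm_num)
    · exact base I hI4
    · exact base (-1) (by norm_num)
    · exact base (-I) hnI4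

/-- for distinct `[a],[b] ∈ Λ₁`, `mult(a,b) = 6` and
`Λ(a,b) = {[c] ∈ Λ₂ : Supp c = Supp a ∪ Supp b}`, a set of exactly 4 elements. -/
theorem stmt2 : ∀ A ∈ Lambda1, ∀ B ∈ Lambda1, A ≠ B →
    mult A B = 6 ∧
    (∀ a b : V, cls a = A → cls b = B →
      LambdaAB A B = {C | C ∈ Lambda2 ∧ SuppC C = Supp a ∪ Supp b}) ∧
    (LambdaAB A B).ncard = 4 := by
  intro A hA B hB hAB
  obtain ⟨j, rfl⟩ := lambda1_struct hA
  obtain ⟨k, rfl⟩ := lambda1_struct hB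
  have hjk : j ≠ k := fun h => hAB (by rw [h])
  have hI4 : (I : ℂ) ^ 4 = 1 := by
    rw [show (4 : ℕ) = 2 * 2 from rfl, pow_mul, Complex.I_sq]; norm_num
  have hnI4 : (-I : ℂ) ^ 4 = 1 := by
    rw [show (-I : ℂ) ^ 4 = I ^ 4 by ring, hI4]
  have c1I : (1 : ℂ) ≠ I := by norm_num [Complex.ext_iff]
  have c1n : (1 : ℂ) ≠ -1 := by norm_num
  have c1nI : (1 : ℂ) ≠ -I := by norm_num [Complex.ext_iff]
  have cIn1 : (I : ℂ) ≠ -1 := by norm_num [Complex.ext_iff]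
  have cInI : (I : ℂ) ≠ -I := by norm_num [Complex.ext_iff]
  have cn1nI : (-1 : ℂ) ≠ -I := by norm_num [Complex.ext_iff]
  have n12 := cls_ev_ne hjk
  have nj1 : cls (ev j) ≠ cls (vv j k 1) := cls_ev_ne_vv hjk one_ne_zero
  have njI : cls (ev j) ≠ cls (vv j k I) := cls_ev_ne_vv hjk Complex.I_ne_zero
  have njn1 : cls (ev j) ≠ cls (vv j k (-1)) := cls_ev_ne_vv hjk (by norm_num)
  have njnI : cls (ev j) ≠ cls (vv j k (-I)) :=
    cls_ev_ne_vv hjk (neg_ne_zero.2 Complex.I_ne_zero)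
  have nk1 : cls (ev k) ≠ cls (vv j k 1) := cls_ev_ne_vv hjk one_ne_zero
  have nkI : cls (ev k) ≠ cls (vv j k I) := cls_ev_ne_vv hjk Complex.I_ne_zero
  have nkn1 : cls (ev k) ≠ cls (vv j k (-1)) := cls_ev_ne_vv hjk (by norm_num)
  have nknI : cls (ev k) ≠ cls (vv j k (-I)) :=
    cls_ev_ne_vv hjk (neg_ne_zero.2 Complex.I_ne_zero)
  have v1I := cls_vv_ne hjk c1I
  have v1n1 := cls_vv_ne hjk c1n
  have v1nI := cls_vv_ne hjk c1nI
  have vIn1 := cls_vv_ne hjk cIn1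
  have vInI := cls_vv_ne hjk cInI
  have vn1nI := cls_vv_ne hjk cn1nI
  have hhat := hat_eq hjk
  have hne : ∀ u : ℂ, u ≠ 0 →
      ¬(cls (vv j k u) = cls (ev j) ∨ cls (vv j k u) = cls (ev k)) := by
    rintro u hu (h | h) <;> exact cls_ev_ne_vv hjk hu h.symm
  have habEq : LambdaAB (cls (ev j)) (cls (ev k)) =
      {cls (vv j k 1), cls (vv j k I), cls (vv j k (-1)), cls (vv j k (-I))} := by
    rw [LambdaAB, hhat]
    ext C
    simp only [Set.mem_diff, Set.mem_insert_iff, Set.mem_singleton_iff]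
    constructor
    · rintro ⟨h, hn⟩
      push_neg at hn
      rcases h with rfl | rfl | h | h | h | h
      · exact absurd rfl hn.1
      · exact absurd rfl hn.2
      · tauto
      · tauto
      · tauto
      · tauto
    · intro h
      refine ⟨by tauto, ?_⟩
      rcases h with rfl | rfl | rfl | rfl
      · exact hne 1 one_ne_zero
      · exact hne I Complex.I_ne_zero
      · exact hne (-1) (by norm_num)
      · exact hne (-I) (neg_ne_zero.2 Complex.I_ne_zero)
  refine ⟨?_, ?_, ?_⟩
  · show (LambdaHat (cls (ev j)) (cls (ev k))).ncard = 6
    rw [hhat,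
      Set.ncard_insert_of_notMem (by simp [n12, nj1, njI, njn1, njnI])
        (((((Set.finite_singleton _).insert _).insert _).insert _).insert _),
      Set.ncard_insert_of_notMem (by simp [nk1, nkI, nkn1, nknI])
        ((((Set.finite_singleton _).insert _).insert _).insert _),
      Set.ncard_insert_of_notMem (by simp [v1I, v1n1, v1nI])
        (((Set.finite_singleton _).insert _).insert _),
      Set.ncard_insert_of_notMem (by simp [vIn1, vInI])
        ((Set.finite_singleton _).insert _),
      Set.ncard_pair vn1nI]
  · intro a b ha hb
    have hSa : Supp a = {j} := by rw [Supp_cls_eq ha, Supp_ev]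
    have hSb : Supp b = {k} := by rw [Supp_cls_eq hb, Supp_ev]
    rw [habEq, hSa, hSb]
    ext C
    simp only [Set.mem_insert_iff, Set.mem_singleton_iff, Set.mem_setOf_eq]
    constructor
    · rintro (rfl | rfl | rfl | rfl)
      · exact ⟨vv_mem_Lambda2 hjk (by norm_num),
          by rw [SuppC_cls, Supp_vv hjk one_ne_zero, Set.singleton_union]⟩
      · exact ⟨vv_mem_Lambda2 hjk hI4,
          by rw [SuppC_cls, Supp_vv hjk Complex.I_ne_zero, Set.singleton_union]⟩
      · exact ⟨vv_mem_Lambda2 hjk (by norm_num),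
          by rw [SuppC_cls, Supp_vv (u := (-1 : ℂ)) hjk (by norm_num), Set.singleton_union]⟩
      · exact ⟨vv_mem_Lambda2 hjk hnI4,
          by rw [SuppC_cls, Supp_vv hjk (neg_ne_zero.2 Complex.I_ne_zero), Set.singleton_union]⟩
    · rintro ⟨hC2, hCS⟩
      obtain ⟨a', ha'c, ha'P, _⟩ := hC2
      have hsupp : Supp a' = {j, k} := by
        rw [← SuppC_cls a', ha'c, hCS, Set.singleton_union]
      have hmem := lambda2_classify hjk ha'P hsupp
      rw [← ha'c]
      simpa using hmem
  · rw [habEq,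
      Set.ncard_insert_of_notMem (by simp [v1I, v1n1, v1nI])
        (((Set.finite_singleton _).insert _).insert _),
      Set.ncard_insert_of_notMem (by simp [vIn1, vInI])
        ((Set.finite_singleton _).insert _),
      Set.ncard_pair vn1nI]

end G31
end
end

section
/- Let [a], [b] ∈ Λ₂ be distinct with Supp(a) = Supp(b). Then mult(a,b) = 6 and {[c] ∈ Λ : X_c ⊇ X_a ∩ X_b} = {[c] ∈ Λ : Supp(c) ⊆ Supp(a)}; in particular |Λ₁(a,b)| = 2 and |Λ₂(a,b)| = 2. -/
open Complex

noncomputable section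

namespace G31

-- ==================== auxiliary lemmas ====================

lemma rel_of_cls_eq {a b : V} (h : cls a = cls b) : rel a b := Quotient.exact h

lemma cls_eq_of_rel {a b : V} (h : rel a b) : cls a = cls b := Quotient.sound h

lemma xi_ne_zero {ξ : ℂ} (hξ : ξ ^ 4 = 1) : ξ ≠ 0 := by
  intro h; rw [h] at hξ; norm_num at hξ

lemma supp_eq_of_rel {a b : V} (h : rel a b) : Supp a = Supp b := by
  obtain ⟨ξ, hξ, rfl⟩ := h
  ext j
  simp only [Supp, Set.mem_setOf_eq, Pi.smul_apply, smul_eq_mul, mul_ne_zero_iff]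
  exact ⟨fun hj => ⟨xi_ne_zero hξ, hj⟩, fun hj => hj.2⟩

lemma Xa_eq_of_rel {a b : V} (h : rel a b) : Xa a = Xa b := by
  obtain ⟨ξ, hξ, rfl⟩ := h
  ext x
  simp only [Xa, Set.mem_setOf_eq, Pi.smul_apply, smul_eq_mul, mul_assoc, ← Finset.mul_sum]
  constructor
  · intro hx; rw [hx, mul_zero]
  · intro hx; exact (mul_eq_zero.mp hx).resolve_left (xi_ne_zero hξ)

lemma psiv_of_rel {a b : V} (h : rel a b) (ha : PsiV a) : PsiV b := by
  obtain ⟨ξ, hξ, rfl⟩ := h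
  intro k
  rcases ha k with h0 | h4
  · show ξ * a k ∈ Psi
    rw [show a k = 0 from h0, mul_zero]
    exact Set.mem_insert 0 _
  · right; show (ξ * a k) ^ 4 = 1
    rw [mul_pow, hξ, one_mul]; exact h4

lemma suppC_cls (x : V) : SuppC (cls x) = Supp x := by
  ext k
  constructor
  · rintro ⟨a, ha, hk⟩
    have := supp_eq_of_rel (rel_of_cls_eq ha)
    rw [← this]; exact hk
  · intro hk; exact ⟨x, rfl, hk⟩

/-- the vector with value `α` at `k`, `β` at `l`, `0` elsewhere -/
def vec (k l : Fin 4) (α β : ℂ) : V := fun j => if j = k then α else if j = l then β else 0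

lemma vec_k {k l : Fin 4} (α β : ℂ) : vec k l α β k = α := by simp [vec]

lemma vec_l {k l : Fin 4} (hkl : k ≠ l) (α β : ℂ) : vec k l α β l = β := by
  simp [vec, hkl.symm]

lemma vec_other {k l : Fin 4} {j : Fin 4} (hjk : j ≠ k) (hjl : j ≠ l) (α β : ℂ) :
    vec k l α β j = 0 := by simp [vec, hjk, hjl]

lemma supp_vec {k l : Fin 4} (hkl : k ≠ l) {α β : ℂ} (hα : α ≠ 0) (hβ : β ≠ 0) :
    Supp (vec k l α β) = {k, l} := by
  ext j
  simp only [Supp, Set.mem_setOf_eq, Set.mem_insert_iff, Set.mem_singleton_iff]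
  by_cases hjk : j = k
  · subst hjk; simp [vec_k, hα]
  · by_cases hjl : j = l
    · subst hjl; simp [vec_l hkl, hβ, hjk]
    · simp [vec_other hjk hjl, hjk, hjl]

lemma supp_vec0 {k l : Fin 4} (hkl : k ≠ l) {β : ℂ} (hβ : β ≠ 0) :
    Supp (vec k l 0 β) = {l} := by
  ext j
  simp only [Supp, Set.mem_setOf_eq, Set.mem_singleton_iff]
  by_cases hjk : j = k
  · subst hjk; simp [vec_k, hkl]
  · by_cases hjl : j = l
    · subst hjl; simp [vec_l hkl, hβ]
    · simp [vec_other hjk hjl, hjl]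

lemma sum_eq {k l : Fin 4} (hkl : k ≠ l) (c x : V) (hc : ∀ j, j ≠ k → j ≠ l → c j = 0) :
    ∑ j, c j * x j = c k * x k + c l * x l := by
  have hp : ∑ j ∈ ({k, l} : Finset (Fin 4)), c j * x j = c k * x k + c l * x l :=
    Finset.sum_pair hkl
  rw [← hp]
  refine (Finset.sum_subset (Finset.subset_univ _) ?_).symm
  intro j _ hj
  simp only [Finset.mem_insert, Finset.mem_singleton, not_or] at hj
  rw [hc j hj.1 hj.2, zero_mul]


lemma mem_Psi {z : ℂ} (h : z = 0 ∨ z ^ 4 = 1) : z ∈ Psi := by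
  rcases h with h | h
  · rw [h]; exact Set.mem_insert 0 _
  · exact Set.mem_insert_of_mem _ h

lemma psi_pow_s5 {z : ℂ} (h : z ∈ Psi) (h0 : z ≠ 0) : z ^ 4 = 1 := by
  rcases h with h | h
  · exact absurd h h0
  · exact h

lemma I_pow4 : (I : ℂ) ^ 4 = 1 := by
  rw [show (4 : ℕ) = 2 * 2 from rfl, pow_mul, Complex.I_sq]; norm_num

lemma psiv_vec {k l : Fin 4} {α β : ℂ} (hα : α = 0 ∨ α ^ 4 = 1) (hβ : β = 0 ∨ β ^ 4 = 1) :
    PsiV (vec k l α β) := by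
  intro j
  unfold vec
  by_cases hjk : j = k
  · rw [if_pos hjk]; exact mem_Psi hα
  · by_cases hjl : j = l
    · rw [if_neg hjk, if_pos hjl]; exact mem_Psi hβ
    · rw [if_neg hjk, if_neg hjl]; exact mem_Psi (Or.inl rfl)

lemma supp_vec0' {k l : Fin 4} (hkl : k ≠ l) {α : ℂ} (hα : α ≠ 0) :
    Supp (vec k l α 0) = {k} := by
  ext j
  simp only [Supp, Set.mem_setOf_eq, Set.mem_singleton_iff]
  by_cases hjk : j = k
  · subst hjk; simp [vec_k, hα]
  · by_cases hjl : j = l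
    · subst hjl; simp [vec_l hkl, hjk]
    · simp [vec_other hjk hjl, hjk]

lemma vec_rel {k l : Fin 4} (hkl : k ≠ l) {α β α' β' : ℂ}
    (h : cls (vec k l α β) = cls (vec k l α' β')) :
    ∃ ξ : ℂ, ξ ^ 4 = 1 ∧ α' = ξ * α ∧ β' = ξ * β := by
  obtain ⟨ξ, hξ, he⟩ := rel_of_cls_eq h
  refine ⟨ξ, hξ, ?_, ?_⟩
  · have := congrFun he k
    simpa [vec_k] using this
  · have := congrFun he l
    simpa [vec_l hkl] using this

lemma w_inj {k l : Fin 4} (hkl : k ≠ l) {ζ ζ' : ℂ}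
    (h : cls (vec k l 1 ζ) = cls (vec k l 1 ζ')) : ζ = ζ' := by
  obtain ⟨ξ, _, h1, h2⟩ := vec_rel hkl h
  rw [mul_one] at h1
  rw [h2, ← h1, one_mul]

lemma c0_ne_w {k l : Fin 4} (hkl : k ≠ l) (ζ : ℂ) :
    cls (vec k l 0 1) ≠ cls (vec k l 1 ζ) := by
  intro h
  obtain ⟨ξ, hξ, h1, h2⟩ := vec_rel hkl h
  rw [mul_zero] at h1
  exact one_ne_zero h1

lemma cls_eq_w {k l : Fin 4} (hkl : k ≠ l) {x : V} (hx4k : x k ^ 4 = 1)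
    (hother : ∀ j, j ≠ k → j ≠ l → x j = 0) :
    cls x = cls (vec k l 1 (x l * (x k)⁻¹)) := by
  have hxk : x k ≠ 0 := fun h => by rw [h] at hx4k; norm_num at hx4k
  apply cls_eq_of_rel
  refine ⟨(x k)⁻¹, by rw [inv_pow, hx4k, inv_one], ?_⟩
  funext j
  by_cases hjk : j = k
  · subst hjk
    show vec j l 1 (x l * (x j)⁻¹) j = (x j)⁻¹ * x j
    rw [vec_k, inv_mul_cancel₀ hxk]
  · by_cases hjl : j = l
    · subst hjl
      show vec k j 1 (x j * (x k)⁻¹) j = (x k)⁻¹ * x j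
      rw [vec_l hkl, mul_comm]
    · show vec k l 1 (x l * (x k)⁻¹) j = (x k)⁻¹ * x j
      rw [vec_other hjk hjl, hother j hjk hjl, mul_zero]

lemma cls_eq_c0 {k l : Fin 4} (hkl : k ≠ l) {x : V} (hx4l : x l ^ 4 = 1) (hxk : x k = 0)
    (hother : ∀ j, j ≠ k → j ≠ l → x j = 0) :
    cls x = cls (vec k l 0 1) := by
  have hxl : x l ≠ 0 := fun h => by rw [h] at hx4l; norm_num at hx4l
  apply cls_eq_of_rel
  refine ⟨(x l)⁻¹, by rw [inv_pow, hx4l, inv_one], ?_⟩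
  funext j
  by_cases hjk : j = k
  · subst hjk
    show vec j l 0 1 j = (x l)⁻¹ * x j
    rw [vec_k, hxk, mul_zero]
  · by_cases hjl : j = l
    · subst hjl
      show vec k j 0 1 j = (x j)⁻¹ * x j
      rw [vec_l hkl, inv_mul_cancel₀ hxl]
    · show vec k l 0 1 j = (x l)⁻¹ * x j
      rw [vec_other hjk hjl, hother j hjk hjl, mul_zero]

lemma sum_single (c : V) (m : Fin 4) :
    ∑ j, c j * (fun j' => if j' = m then (1 : ℂ) else 0) j = c m := by
  simp [mul_ite]

lemma lambda_rep {C : Phi} (h : C ∈ Lambda) :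
    ∃ x : V, cls x = C ∧ PsiV x ∧
      ((Supp x).ncard = 1 ∨ (Supp x).ncard = 2 ∨ (Supp x).ncard = 4) := by
  rcases h with (⟨x, h1, h2, h3⟩ | ⟨x, h1, h2, h3⟩) | ⟨x, h1, h2, h3, _⟩
  · exact ⟨x, h1, h2, Or.inl h3⟩
  · exact ⟨x, h1, h2, Or.inr (Or.inl h3)⟩
  · exact ⟨x, h1, h2, Or.inr (Or.inr h3)⟩

lemma ncard_supp_of_mem1 {x : V} {C : Phi} (hx : cls x = C) (hC : C ∈ Lambda1) :
    (Supp x).ncard = 1 := by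
  obtain ⟨y, hy, _, hny⟩ := hC
  rw [supp_eq_of_rel (rel_of_cls_eq (hx.trans hy.symm))]
  exact hny

lemma ncard_supp_of_mem2 {x : V} {C : Phi} (hx : cls x = C) (hC : C ∈ Lambda2) :
    (Supp x).ncard = 2 := by
  obtain ⟨y, hy, _, hny⟩ := hC
  rw [supp_eq_of_rel (rel_of_cls_eq (hx.trans hy.symm))]
  exact hny

lemma supp_vec_sub {k l : Fin 4} (α β : ℂ) : Supp (vec k l α β) ⊆ {k, l} := by
  intro j hj
  by_contra h
  simp only [Set.mem_insert_iff, Set.mem_singleton_iff, not_or] at h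
  exact hj (vec_other h.1 h.2 α β)

lemma neg_I_pow4 : (-I : ℂ) ^ 4 = 1 := by
  rw [show (-I : ℂ) ^ 4 = I ^ 4 by ring, I_pow4]

lemma classify {k l : Fin 4} (hkl : k ≠ l) {C : Phi} (hC : C ∈ Lambda)
    (hsupp : SuppC C ⊆ {k, l}) :
    C = cls (vec k l 0 1) ∨
      ∃ ζ : ℂ, (ζ = 0 ∨ ζ = 1 ∨ ζ = -1 ∨ ζ = I ∨ ζ = -I) ∧ C = cls (vec k l 1 ζ) := by
  obtain ⟨x, hx, hPx, hn⟩ := lambda_rep hC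
  have hsx : Supp x ⊆ ({k, l} : Set (Fin 4)) := by
    rw [← suppC_cls x, hx]; exact hsupp
  have hxo : ∀ j, j ≠ k → j ≠ l → x j = 0 := by
    intro j h1 h2
    by_contra h
    rcases hsx h with h' | h'
    · exact h1 h'
    · exact h2 h'
  by_cases hxk : x k = 0
  · have hxl : x l ≠ 0 := by
      intro hxl
      have he : Supp x = ∅ := by
        ext j
        simp only [Supp, Set.mem_setOf_eq, Set.mem_empty_iff_false, iff_false, not_not]
        by_cases hjk : j = k
        · rw [hjk]; exact hxk
        · by_cases hjl : j = l
          · rw [hjl]; exact hxl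
          · exact hxo j hjk hjl
      rw [he, Set.ncard_empty] at hn
      rcases hn with h | h | h <;> norm_num at h
    exact Or.inl (hx.symm.trans (cls_eq_c0 hkl (psi_pow_s5 (hPx l) hxl) hxk hxo))
  · have hxk4 := psi_pow_s5 (hPx k) hxk
    refine Or.inr ⟨x l * (x k)⁻¹, ?_, hx.symm.trans (cls_eq_w hkl hxk4 hxo)⟩
    by_cases hxl : x l = 0
    · exact Or.inl (by rw [hxl, zero_mul])
    · refine Or.inr ?_
      have h4 : (x l * (x k)⁻¹) ^ 4 = 1 := by
        rw [mul_pow, inv_pow, psi_pow_s5 (hPx l) hxl, hxk4]; norm_num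
      exact mu4_cases h4

lemma finpair {α : Type*} (a b : α) : ({a, b} : Set α).Finite :=
  (Set.finite_singleton b).insert a

lemma fin3 {α : Type*} (a b c : α) : ({a, b, c} : Set α).Finite := (finpair b c).insert a

lemma fin4 {α : Type*} (a b c d : α) : ({a, b, c, d} : Set α).Finite := (fin3 b c d).insert a

lemma fin5 {α : Type*} (a b c d e : α) : ({a, b, c, d, e} : Set α).Finite :=
  (fin4 b c d e).insert a

lemma ncard4 {α : Type*} {a b c d : α} (h1 : a ∉ ({b, c, d} : Set α))
    (h2 : b ∉ ({c, d} : Set α)) (h3 : c ≠ d) : ({a, b, c, d} : Set α).ncard = 4 := by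
  rw [Set.ncard_insert_of_notMem h1 (fin3 b c d),
    Set.ncard_insert_of_notMem h2 (finpair c d), Set.ncard_pair h3]

lemma ncard6 {α : Type*} {a b c d e f : α} (h1 : a ∉ ({b, c, d, e, f} : Set α))
    (h2 : b ∉ ({c, d, e, f} : Set α)) (h3 : c ∉ ({d, e, f} : Set α))
    (h4 : d ∉ ({e, f} : Set α)) (h5 : e ≠ f) :
    ({a, b, c, d, e, f} : Set α).ncard = 6 := by
  rw [Set.ncard_insert_of_notMem h1 (fin5 b c d e f),
    Set.ncard_insert_of_notMem h2 (fin4 c d e f),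
    Set.ncard_insert_of_notMem h3 (fin3 d e f),
    Set.ncard_insert_of_notMem h4 (finpair e f), Set.ncard_pair h5]

/-- let `[a], [b] ∈ Λ₂` be distinct with `Supp a = Supp b`.  Then `mult(a,b) = 6`,
`{[c] ∈ Λ : X_c ⊇ X_a ∩ X_b} = {[c] ∈ Λ : Supp c ⊆ Supp a}`; in particular `|Λ₁(a,b)| = 2`
and `|Λ₂(a,b)| = 2`. -/
theorem stmt5 : ∀ A ∈ Lambda2, ∀ B ∈ Lambda2, A ≠ B → ∀ a b : V, cls a = A → cls b = B →
    Supp a = Supp b →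
    mult A B = 6 ∧
    LambdaHat A B = {C | C ∈ Lambda ∧ SuppC C ⊆ Supp a} ∧
    (Lambda1 ∩ LambdaAB A B).ncard = 2 ∧ (Lambda2 ∩ LambdaAB A B).ncard = 2 := by
  intro A hA B hB hAB a b ha hb hsab
  classical
  -- representative data
  obtain ⟨a', ha', hPa', hna'⟩ := hA
  have hra : rel a' a := rel_of_cls_eq (ha'.trans ha.symm)
  have hPa : PsiV a := psiv_of_rel hra hPa'
  have hna : (Supp a).ncard = 2 := by rw [← supp_eq_of_rel hra]; exact hna'
  obtain ⟨b', hb', hPb', hnb'⟩ := hB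
  have hrb : rel b' b := rel_of_cls_eq (hb'.trans hb.symm)
  have hPb : PsiV b := psiv_of_rel hrb hPb'
  obtain ⟨k, l, hkl, hS⟩ := Set.ncard_eq_two.mp hna
  have hak : a k ≠ 0 := by
    have : k ∈ Supp a := by rw [hS]; exact Set.mem_insert _ _
    exact this
  have hal : a l ≠ 0 := by
    have : l ∈ Supp a := by rw [hS]; exact Set.mem_insert_of_mem _ rfl
    exact this
  have hbk : b k ≠ 0 := by
    have : k ∈ Supp b := by rw [← hsab, hS]; exact Set.mem_insert _ _
    exact this
  have hbl : b l ≠ 0 := by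
    have : l ∈ Supp b := by rw [← hsab, hS]; exact Set.mem_insert_of_mem _ rfl
    exact this
  have hao : ∀ j, j ≠ k → j ≠ l → a j = 0 := by
    intro j h1 h2
    by_contra h
    have : j ∈ Supp a := h
    rw [hS] at this
    rcases this with h' | h'
    · exact h1 h'
    · exact h2 h'
  have hbo : ∀ j, j ≠ k → j ≠ l → b j = 0 := by
    intro j h1 h2
    by_contra h
    have : j ∈ Supp b := h
    rw [← hsab, hS] at this
    rcases this with h' | h'
    · exact h1 h'
    · exact h2 h'
  have hak4 : a k ^ 4 = 1 := psi_pow_s5 (hPa k) hak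
  have hal4 : a l ^ 4 = 1 := psi_pow_s5 (hPa l) hal
  have hbk4 : b k ^ 4 = 1 := psi_pow_s5 (hPb k) hbk
  have hbl4 : b l ^ 4 = 1 := psi_pow_s5 (hPb l) hbl
  have hnab : ¬ rel a b := fun h => hAB (by rw [← ha, ← hb, cls_eq_of_rel h])
  -- the determinant is nonzero
  have hdet : a k * b l - a l * b k ≠ 0 := by
    intro hD
    apply hnab
    refine ⟨b k * (a k)⁻¹, ?_, ?_⟩
    · rw [mul_pow, inv_pow, hak4, hbk4, inv_one, mul_one]
    · funext j
      show b j = b k * (a k)⁻¹ * a j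
      by_cases hjk : j = k
      · subst hjk; field_simp
      · by_cases hjl : j = l
        · subst hjl
          field_simp
          linear_combination hD
        · rw [hao j hjk hjl, hbo j hjk hjl, mul_zero]
  -- computation of the intersection
  have hX : Xa a ∩ Xa b = {x : V | x k = 0 ∧ x l = 0} := by
    ext x
    simp only [Set.mem_inter_iff, Xa, Set.mem_setOf_eq]
    rw [sum_eq hkl a x hao, sum_eq hkl b x hbo]
    constructor
    · rintro ⟨h1, h2⟩
      constructor
      · have hk0 : (a k * b l - a l * b k) * x k = 0 := by
          linear_combination b l * h1 - a l * h2
        exact (mul_eq_zero.mp hk0).resolve_left hdet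
      · have hl0 : (a k * b l - a l * b k) * x l = 0 := by
          linear_combination a k * h2 - b k * h1
        exact (mul_eq_zero.mp hl0).resolve_left hdet
    · rintro ⟨h1, h2⟩
      rw [h1, h2]
      constructor <;> ring
  -- the hat set equals the support condition set
  have hHat : LambdaHat A B = {C | C ∈ Lambda ∧ SuppC C ⊆ Supp a} := by
    ext C
    simp only [LambdaHat, Set.mem_setOf_eq]
    constructor
    · rintro ⟨hCL, xa, xb, xc, hxa, hxb, hxc, hsub⟩
      refine ⟨hCL, ?_⟩
      rw [← hxc, suppC_cls, hS]
      intro m hm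
      by_contra hmkl
      simp only [Set.mem_insert_iff, Set.mem_singleton_iff, not_or] at hmkl
      have hmem : (fun j' => if j' = m then (1 : ℂ) else 0) ∈ Xa xa ∩ Xa xb := by
        rw [Xa_eq_of_rel (rel_of_cls_eq (hxa.trans ha.symm)),
          Xa_eq_of_rel (rel_of_cls_eq (hxb.trans hb.symm)), hX]
        exact ⟨if_neg (fun h => hmkl.1 h.symm), if_neg (fun h => hmkl.2 h.symm)⟩
      have h0 : xc m = 0 := by
        have := hsub hmem
        rwa [Xa, Set.mem_setOf_eq, sum_single xc m] at this
      exact hm h0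
    · rintro ⟨hCL, hsupp⟩
      obtain ⟨xc, hxc, hPc, _⟩ := lambda_rep hCL
      refine ⟨hCL, a, b, xc, ha, hb, hxc, ?_⟩
      rw [hX]
      rintro x ⟨h1, h2⟩
      show ∑ j, xc j * x j = 0
      apply Finset.sum_eq_zero
      intro j _
      by_cases hjk : j = k
      · rw [hjk, h1, mul_zero]
      · by_cases hjl : j = l
        · rw [hjl, h2, mul_zero]
        · have hj : xc j = 0 := by
            by_contra h
            have hjC : j ∈ SuppC C := by rw [← hxc, suppC_cls]; exact h
            have := hsupp hjC
            rw [hS] at this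
            rcases this with h' | h'
            · exact hjk h'
            · exact hjl h'
          rw [hj, zero_mul]
  -- membership facts for the six classes
  have hI4 : (I : ℂ) ^ 4 = 1 := I_pow4
  have hnI4 : (-I : ℂ) ^ 4 = 1 := neg_I_pow4
  have hc0L1 : cls (vec k l 0 1) ∈ Lambda1 :=
    ⟨vec k l 0 1, rfl, psiv_vec (Or.inl rfl) (Or.inr (by norm_num)),
      by rw [supp_vec0 hkl one_ne_zero]; exact Set.ncard_singleton l⟩
  have hc1L1 : cls (vec k l 1 0) ∈ Lambda1 :=
    ⟨vec k l 1 0, rfl, psiv_vec (Or.inr (by norm_num)) (Or.inl rfl),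
      by rw [supp_vec0' hkl one_ne_zero]; exact Set.ncard_singleton k⟩
  have hwL2 : ∀ ζ : ℂ, ζ ≠ 0 → ζ ^ 4 = 1 → cls (vec k l 1 ζ) ∈ Lambda2 := by
    intro ζ h0 h4
    exact ⟨vec k l 1 ζ, rfl, psiv_vec (Or.inr (by norm_num)) (Or.inr h4),
      by rw [supp_vec hkl one_ne_zero h0]; exact Set.ncard_pair hkl⟩
  have hsupC : ∀ α β : ℂ, SuppC (cls (vec k l α β)) ⊆ Supp a := by
    intro α β
    rw [suppC_cls, hS]
    exact supp_vec_sub α β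
  -- the six-element set
  have hTset : {C | C ∈ Lambda ∧ SuppC C ⊆ Supp a} =
      ({cls (vec k l 0 1), cls (vec k l 1 0), cls (vec k l 1 1), cls (vec k l 1 (-1)),
        cls (vec k l 1 I), cls (vec k l 1 (-I))} : Set Phi) := by
    ext C
    simp only [Set.mem_setOf_eq, Set.mem_insert_iff, Set.mem_singleton_iff]
    constructor
    · rintro ⟨hCL, hs⟩
      have hs' : SuppC C ⊆ ({k, l} : Set (Fin 4)) := hS ▸ hs
      rcases classify hkl hCL hs' with h | ⟨ζ, hζ, h⟩
      · exact Or.inl h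
      · rcases hζ with rfl | rfl | rfl | rfl | rfl
        · exact Or.inr (Or.inl h)
        · exact Or.inr (Or.inr (Or.inl h))
        · exact Or.inr (Or.inr (Or.inr (Or.inl h)))
        · exact Or.inr (Or.inr (Or.inr (Or.inr (Or.inl h))))
        · exact Or.inr (Or.inr (Or.inr (Or.inr (Or.inr h))))
    · rintro (rfl | rfl | rfl | rfl | rfl | rfl)
      · exact ⟨Or.inl (Or.inl hc0L1), hsupC 0 1⟩
      · exact ⟨Or.inl (Or.inl hc1L1), hsupC 1 0⟩
      · exact ⟨Or.inl (Or.inr (hwL2 1 one_ne_zero (by norm_num))), hsupC 1 1⟩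
      · exact ⟨Or.inl (Or.inr (hwL2 (-1) (by norm_num) (by norm_num))), hsupC 1 (-1)⟩
      · exact ⟨Or.inl (Or.inr (hwL2 I Complex.I_ne_zero hI4)), hsupC 1 I⟩
      · exact ⟨Or.inl (Or.inr (hwL2 (-I) (neg_ne_zero.mpr Complex.I_ne_zero) hnI4)),
          hsupC 1 (-I)⟩
  -- distinctness tools
  have hw : ∀ ζ ζ' : ℂ, ζ ≠ ζ' → cls (vec k l 1 ζ) ≠ cls (vec k l 1 ζ') :=
    fun ζ ζ' h hh => h (w_inj hkl hh)
  have ne01 : (0 : ℂ) ≠ 1 := by norm_num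
  have ne0n1 : (0 : ℂ) ≠ -1 := by norm_num
  have ne0I : (0 : ℂ) ≠ I := by norm_num [Complex.ext_iff]
  have ne0nI : (0 : ℂ) ≠ -I := by norm_num [Complex.ext_iff]
  have ne1n1 : (1 : ℂ) ≠ -1 := by norm_num
  have ne1I : (1 : ℂ) ≠ I := by norm_num [Complex.ext_iff]
  have ne1nI : (1 : ℂ) ≠ -I := by norm_num [Complex.ext_iff]
  have nen1I : (-1 : ℂ) ≠ I := by norm_num [Complex.ext_iff]
  have nen1nI : (-1 : ℂ) ≠ -I := by norm_num [Complex.ext_iff]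
  have neInI : (I : ℂ) ≠ -I := by norm_num [Complex.ext_iff]
  -- ncard of the six-element set
  have hT6 : ({cls (vec k l 0 1), cls (vec k l 1 0), cls (vec k l 1 1), cls (vec k l 1 (-1)),
      cls (vec k l 1 I), cls (vec k l 1 (-I))} : Set Phi).ncard = 6 := by
    refine ncard6 ?_ ?_ ?_ ?_ (hw I (-I) neInI)
    · simp only [Set.mem_insert_iff, Set.mem_singleton_iff, not_or]
      exact ⟨c0_ne_w hkl 0, c0_ne_w hkl 1, c0_ne_w hkl (-1), c0_ne_w hkl I, c0_ne_w hkl (-I)⟩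
    · simp only [Set.mem_insert_iff, Set.mem_singleton_iff, not_or]
      exact ⟨hw 0 1 ne01, hw 0 (-1) ne0n1, hw 0 I ne0I, hw 0 (-I) ne0nI⟩
    · simp only [Set.mem_insert_iff, Set.mem_singleton_iff, not_or]
      exact ⟨hw 1 (-1) ne1n1, hw 1 I ne1I, hw 1 (-I) ne1nI⟩
    · simp only [Set.mem_insert_iff, Set.mem_singleton_iff, not_or]
      exact ⟨hw (-1) I nen1I, hw (-1) (-I) nen1nI⟩
  -- A and B are among the four Λ₂ classes
  have hA4 : A = cls (vec k l 1 (a l * (a k)⁻¹)) := ha.symm.trans (cls_eq_w hkl hak4 hao)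
  have hB4 : B = cls (vec k l 1 (b l * (b k)⁻¹)) := hb.symm.trans (cls_eq_w hkl hbk4 hbo)
  have hζa : a l * (a k)⁻¹ = 1 ∨ a l * (a k)⁻¹ = -1 ∨ a l * (a k)⁻¹ = I ∨
      a l * (a k)⁻¹ = -I := mu4_cases (by rw [mul_pow, inv_pow, hal4, hak4]; norm_num)
  have hζb : b l * (b k)⁻¹ = 1 ∨ b l * (b k)⁻¹ = -1 ∨ b l * (b k)⁻¹ = I ∨
      b l * (b k)⁻¹ = -I := mu4_cases (by rw [mul_pow, inv_pow, hbl4, hbk4]; norm_num)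
  have hAS4 : A ∈ ({cls (vec k l 1 1), cls (vec k l 1 (-1)), cls (vec k l 1 I),
      cls (vec k l 1 (-I))} : Set Phi) := by
    simp only [Set.mem_insert_iff, Set.mem_singleton_iff]
    rcases hζa with h | h | h | h
    · exact Or.inl (by rw [hA4, h])
    · exact Or.inr (Or.inl (by rw [hA4, h]))
    · exact Or.inr (Or.inr (Or.inl (by rw [hA4, h])))
    · exact Or.inr (Or.inr (Or.inr (by rw [hA4, h])))
  have hBS4 : B ∈ ({cls (vec k l 1 1), cls (vec k l 1 (-1)), cls (vec k l 1 I),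
      cls (vec k l 1 (-I))} : Set Phi) := by
    simp only [Set.mem_insert_iff, Set.mem_singleton_iff]
    rcases hζb with h | h | h | h
    · exact Or.inl (by rw [hB4, h])
    · exact Or.inr (Or.inl (by rw [hB4, h]))
    · exact Or.inr (Or.inr (Or.inl (by rw [hB4, h])))
    · exact Or.inr (Or.inr (Or.inr (by rw [hB4, h])))
  -- A, B not among the Λ₁ classes
  have hAc0 : A ≠ cls (vec k l 0 1) := by
    intro h
    have h2 := ncard_supp_of_mem2 h.symm ⟨a', ha', hPa', hna'⟩
    rw [supp_vec0 hkl one_ne_zero, Set.ncard_singleton] at h2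
    norm_num at h2
  have hAc1 : A ≠ cls (vec k l 1 0) := by
    intro h
    have h2 := ncard_supp_of_mem2 h.symm ⟨a', ha', hPa', hna'⟩
    rw [supp_vec0' hkl one_ne_zero, Set.ncard_singleton] at h2
    norm_num at h2
  have hBc0 : B ≠ cls (vec k l 0 1) := by
    intro h
    have h2 := ncard_supp_of_mem2 h.symm ⟨b', hb', hPb', hnb'⟩
    rw [supp_vec0 hkl one_ne_zero, Set.ncard_singleton] at h2
    norm_num at h2
  have hBc1 : B ≠ cls (vec k l 1 0) := by
    intro h
    have h2 := ncard_supp_of_mem2 h.symm ⟨b', hb', hPb', hnb'⟩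
    rw [supp_vec0' hkl one_ne_zero, Set.ncard_singleton] at h2
    norm_num at h2
  -- Λ₁ ∩ T and Λ₂ ∩ T
  have h1T : Lambda1 ∩ ({cls (vec k l 0 1), cls (vec k l 1 0), cls (vec k l 1 1),
      cls (vec k l 1 (-1)), cls (vec k l 1 I), cls (vec k l 1 (-I))} : Set Phi) =
      ({cls (vec k l 0 1), cls (vec k l 1 0)} : Set Phi) := by
    ext C
    simp only [Set.mem_inter_iff, Set.mem_insert_iff, Set.mem_singleton_iff]
    constructor
    · have hz : ∀ ζ : ℂ, ζ ≠ 0 → (Supp (vec k l 1 ζ)).ncard = 2 := by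
        intro ζ h0
        rw [supp_vec hkl one_ne_zero h0]
        exact Set.ncard_pair hkl
      rintro ⟨h1, (rfl | rfl | rfl | rfl | rfl | rfl)⟩
      · exact Or.inl rfl
      · exact Or.inr rfl
      · exfalso
        have hc := ncard_supp_of_mem1 rfl h1
        rw [hz 1 one_ne_zero] at hc
        norm_num at hc
      · exfalso
        have hc := ncard_supp_of_mem1 rfl h1
        rw [hz (-1) (by norm_num)] at hc
        norm_num at hc
      · exfalso
        have hc := ncard_supp_of_mem1 rfl h1
        rw [hz I Complex.I_ne_zero] at hc
        norm_num at hc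
      · exfalso
        have hc := ncard_supp_of_mem1 rfl h1
        rw [hz (-I) (neg_ne_zero.mpr Complex.I_ne_zero)] at hc
        norm_num at hc
    · rintro (rfl | rfl)
      · exact ⟨hc0L1, Or.inl rfl⟩
      · exact ⟨hc1L1, Or.inr (Or.inl rfl)⟩
  have h2T : Lambda2 ∩ ({cls (vec k l 0 1), cls (vec k l 1 0), cls (vec k l 1 1),
      cls (vec k l 1 (-1)), cls (vec k l 1 I), cls (vec k l 1 (-I))} : Set Phi) =
      ({cls (vec k l 1 1), cls (vec k l 1 (-1)), cls (vec k l 1 I),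
        cls (vec k l 1 (-I))} : Set Phi) := by
    ext C
    simp only [Set.mem_inter_iff, Set.mem_insert_iff, Set.mem_singleton_iff]
    constructor
    · rintro ⟨h2, (rfl | rfl | rfl | rfl | rfl | rfl)⟩
      · exfalso
        have hn2 := ncard_supp_of_mem2 rfl h2
        rw [supp_vec0 hkl one_ne_zero, Set.ncard_singleton] at hn2
        norm_num at hn2
      · exfalso
        have hn2 := ncard_supp_of_mem2 rfl h2
        rw [supp_vec0' hkl one_ne_zero, Set.ncard_singleton] at hn2
        norm_num at hn2
      · exact Or.inl rfl
      · exact Or.inr (Or.inl rfl)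
      · exact Or.inr (Or.inr (Or.inl rfl))
      · exact Or.inr (Or.inr (Or.inr rfl))
    · rintro (rfl | rfl | rfl | rfl)
      · exact ⟨hwL2 1 one_ne_zero (by norm_num), Or.inr (Or.inr (Or.inl rfl))⟩
      · exact ⟨hwL2 (-1) (by norm_num) (by norm_num), Or.inr (Or.inr (Or.inr (Or.inl rfl)))⟩
      · exact ⟨hwL2 I Complex.I_ne_zero hI4, Or.inr (Or.inr (Or.inr (Or.inr (Or.inl rfl))))⟩
      · exact ⟨hwL2 (-I) (neg_ne_zero.mpr Complex.I_ne_zero) hnI4,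
          Or.inr (Or.inr (Or.inr (Or.inr (Or.inr rfl))))⟩
  -- conclusions
  refine ⟨?_, hHat, ?_, ?_⟩
  · show (LambdaHat A B).ncard = 6
    rw [hHat, hTset]
    exact hT6
  · have he : Lambda1 ∩ LambdaAB A B = ({cls (vec k l 0 1), cls (vec k l 1 0)} : Set Phi) := by
      rw [LambdaAB, hHat, hTset, ← Set.inter_diff_assoc, h1T]
      ext C
      simp only [Set.mem_diff, Set.mem_insert_iff, Set.mem_singleton_iff]
      constructor
      · rintro ⟨h1, _⟩; exact h1
      · rintro (rfl | rfl)
        · exact ⟨Or.inl rfl, by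
            simp only [Set.mem_insert_iff, Set.mem_singleton_iff, not_or]
            exact ⟨fun h => hAc0 h.symm, fun h => hBc0 h.symm⟩⟩
        · exact ⟨Or.inr rfl, by
            simp only [Set.mem_insert_iff, Set.mem_singleton_iff, not_or]
            exact ⟨fun h => hAc1 h.symm, fun h => hBc1 h.symm⟩⟩
    rw [he]
    exact Set.ncard_pair (c0_ne_w hkl 0)
  · have he : Lambda2 ∩ LambdaAB A B =
        ({cls (vec k l 1 1), cls (vec k l 1 (-1)), cls (vec k l 1 I),
          cls (vec k l 1 (-I))} : Set Phi) \ ({A, B} : Set Phi) := by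
      rw [LambdaAB, hHat, hTset, ← Set.inter_diff_assoc, h2T]
    have hsub : ({A, B} : Set Phi) ⊆
        ({cls (vec k l 1 1), cls (vec k l 1 (-1)), cls (vec k l 1 I),
          cls (vec k l 1 (-I))} : Set Phi) := by
      intro x hx
      simp only [Set.mem_insert_iff, Set.mem_singleton_iff] at hx
      rcases hx with rfl | rfl
      · exact hAS4
      · exact hBS4
    rw [he, Set.ncard_diff hsub (finpair A B)]
    rw [ncard4 (by
        simp only [Set.mem_insert_iff, Set.mem_singleton_iff, not_or]
        exact ⟨hw 1 (-1) ne1n1, hw 1 I ne1I, hw 1 (-I) ne1nI⟩)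
      (by
        simp only [Set.mem_insert_iff, Set.mem_singleton_iff, not_or]
        exact ⟨hw (-1) I nen1I, hw (-1) (-I) nen1nI⟩)
      (hw I (-I) neInI), Set.ncard_pair hAB]


end G31
end
end
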